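/- arXiv:2207.06516 — 3 statements merged into one kernel-verified Lean document; each statement's English description precedes it below -/
import Mathlib

section
/- Let X be a geodesic metric space with basepoint o and κ a concave monotone increasing sublinear function. If α₁ and α₂ are weakly κ-Morse quasi-geodesic rays with α₁(0) = α₂(0) = o, then Z = α₁ ∪ α₂ is weakly κ-Morse. Specifically: any (q,Q)-quasi-geodesic segment β with endpoints on Z lies in a (κ, C)-neighborhood of Z for a constant C depending only on q, Q and the weak Morse gauges of α₁ and α₂. -/
/-!
Let `p = β t₀` be a point of the quasi-geodesic `β` closest to `o`. A geodesic `[o, p]` followed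
by either half of `β` from `p` is a `(3 max q 1, Q)`-quasi-geodesic: for `x` on `[o, p]` and `y` on
`β` past `p`, minimality of `d(o, p)` gives `d(x, y) ≥ d(x, p)`, hence `d(p, y) ≤ 2 d(x, y)`.
Both halves start at `o`, which lies on both rays, and end on one of them, so each half lies in
the `κ`-neighbourhood of the ray containing its endpoint.
-/

open Metric Set Filter

/-- A sublinear function: `κ : [0,∞) → [1,∞)` concave, monotone increasing,
with `κ(t)/t → 0`. -/
def Sublinear (κ : ℝ → ℝ) : Prop :=
  (∀ t : ℝ, 1 ≤ κ t) ∧ Monotone κ ∧ ConcaveOn ℝ (Set.Ici 0) κ ∧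
    Tendsto (fun t => κ t / t) atTop (nhds 0)

/-- A continuous `(q,Q)`-quasi-geodesic ray. -/
def QGRay {X : Type*} [MetricSpace X] (q Q : ℝ) (α : ℝ → X) : Prop :=
  Continuous α ∧ ∀ s t : ℝ, 0 ≤ s → 0 ≤ t →
    (1 / q) * |s - t| - Q ≤ dist (α s) (α t) ∧ dist (α s) (α t) ≤ q * |s - t| + Q

/-- A continuous `(q,Q)`-quasi-geodesic segment defined on `[a,b]`. -/
def QGSeg {X : Type*} [MetricSpace X] (q Q a b : ℝ) (α : ℝ → X) : Prop :=
  Continuous α ∧ ∀ s t : ℝ, s ∈ Set.Icc a b → t ∈ Set.Icc a b →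
    (1 / q) * |s - t| - Q ≤ dist (α s) (α t) ∧ dist (α s) (α t) ≤ q * |s - t| + Q

/-- `X` is a geodesic metric space. -/
def IsGeodesicSpace (X : Type*) [MetricSpace X] : Prop :=
  ∀ x y : X, ∃ γ : ℝ → X, γ 0 = x ∧ γ (dist x y) = y ∧
    ∀ s t : ℝ, s ∈ Set.Icc 0 (dist x y) → t ∈ Set.Icc 0 (dist x y) →
      dist (γ s) (γ t) = |s - t|

/-- A set `Z` is weakly `κ`-Morse: there is a map `m : ℝ⁺×ℝ⁺ → ℝ⁺` such that every
`(q,Q)`-quasi-geodesic segment with endpoints on `Z` lies in the `(κ, m q Q)`-neighborhood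
of `Z` (neighborhoods measured with respect to the basepoint `o`). -/
def WeaklyKappaMorse {X : Type*} [MetricSpace X] (o : X) (κ : ℝ → ℝ) (Z : Set X) : Prop :=
  ∃ m : ℝ → ℝ → ℝ, ∀ q Q a b : ℝ, 0 < q → 0 ≤ Q → a ≤ b →
    ∀ β : ℝ → X, QGSeg q Q a b β → β a ∈ Z → β b ∈ Z →
      ∀ s ∈ Set.Icc a b, Metric.infDist (β s) Z ≤ m q Q * κ (dist o (β s))

section

variable {X : Type*} [MetricSpace X]

lemma IsGeodesicSpace.exists_continuous_geodesic (hgeo : IsGeodesicSpace X) (x y : X) :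
    ∃ g : ℝ → X, Continuous g ∧ g 0 = x ∧ g (dist x y) = y ∧
      ∀ s t : ℝ, s ∈ Icc 0 (dist x y) → t ∈ Icc 0 (dist x y) → dist (g s) (g t) = |s - t| := by
  obtain ⟨γ, hγ0, hγd, hiso⟩ := hgeo x y
  have hd : (0 : ℝ) ≤ dist x y := dist_nonneg
  have hrestrict : Isometry fun u : Icc 0 (dist x y) => γ u :=
    Isometry.of_dist_eq fun s t => (hiso s t s.2 t.2).trans (Subtype.dist_eq s t).symm
  refine ⟨IccExtend hd fun u => γ u, hrestrict.continuous.Icc_extend', ?_, ?_,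
    fun s t hs ht => ?_⟩
  · rw [IccExtend_of_mem _ _ (left_mem_Icc.2 hd)]; exact hγ0
  · rw [IccExtend_of_mem _ _ (right_mem_Icc.2 hd)]; exact hγd
  · rw [IccExtend_of_mem _ _ hs, IccExtend_of_mem _ _ ht]; exact hiso s t hs ht

def QGOn (q Q a b : ℝ) (γ : ℝ → X) : Prop :=
  ∀ s t : ℝ, s ∈ Icc a b → t ∈ Icc a b →
    (1 / q) * |s - t| - Q ≤ dist (γ s) (γ t) ∧ dist (γ s) (γ t) ≤ q * |s - t| + Q

lemma qgOn_of_le {q Q a b : ℝ} {γ : ℝ → X}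
    (h : ∀ s t : ℝ, a ≤ s → s ≤ t → t ≤ b →
      (1 / q) * (t - s) - Q ≤ dist (γ s) (γ t) ∧ dist (γ s) (γ t) ≤ q * (t - s) + Q) :
    QGOn q Q a b γ := by
  intro s t hs ht
  rcases le_total s t with hst | hts
  · rw [abs_sub_comm, abs_of_nonneg (sub_nonneg.2 hst)]
    exact h s t hs.1 hst ht.2
  · rw [abs_of_nonneg (sub_nonneg.2 hts), dist_comm]
    exact h t s ht.1 hts hs.2

lemma QGOn.mono {q Q q' Q' a b : ℝ} {γ : ℝ → X} (hγ : QGOn q Q a b γ) (hq : 0 < q)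
    (hqq' : q ≤ q') (hQQ' : Q ≤ Q') : QGOn q' Q' a b γ := by
  intro s t hs ht
  have hinv : 1 / q' ≤ 1 / q := one_div_le_one_div_of_le hq hqq'
  have habs : 0 ≤ |s - t| := abs_nonneg _
  obtain ⟨hlow, hup⟩ := hγ s t hs ht
  constructor <;> nlinarith

lemma QGSeg.reverse {q Q a b : ℝ} {β : ℝ → X} (hβ : QGSeg q Q a b β) :
    QGSeg q Q a b fun u => β (a + b - u) := by
  refine ⟨hβ.1.comp (continuous_const.sub continuous_id), fun s t hs ht => ?_⟩
  have hs' : a + b - s ∈ Icc a b := ⟨by linarith [hs.2], by linarith [hs.1]⟩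
  have ht' : a + b - t ∈ Icc a b := ⟨by linarith [ht.2], by linarith [ht.1]⟩
  have habs : |a + b - s - (a + b - t)| = |s - t| := by
    rw [show a + b - s - (a + b - t) = t - s by ring, abs_sub_comm]
  simpa only [habs] using hβ.2 _ _ hs' ht'

/-- `x` is `u` before `p` on a geodesic from `o` to `p`, and `y` is `v` after `p` along a
quasi-geodesic whose point closest to `o` is `p`. -/
lemma dist_bounds_of_closest_point {o x p y : X} {q Q u v : ℝ} (hq : 0 < q) (hQ : 0 ≤ Q)
    (hu : 0 ≤ u) (hv : 0 ≤ v) (hox : dist o x = dist o p - u) (hxp : dist x p = u)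
    (hclosest : dist o p ≤ dist o y)
    (hpy : (1 / q) * v - Q ≤ dist p y ∧ dist p y ≤ q * v + Q) :
    (1 / (3 * max q 1)) * (u + v) - Q ≤ dist x y ∧ dist x y ≤ 3 * max q 1 * (u + v) + Q := by
  set M := max q 1
  have hM1 : 1 ≤ M := le_max_right _ _
  have hqM : q ≤ M := le_max_left _ _
  have hpy_le : dist p y ≤ dist x p + dist x y := dist_triangle_left _ _ _
  have hu_le : u ≤ dist x y := by linarith [dist_triangle o x y]
  have hv_le : v ≤ q * (2 * dist x y + Q) := by
    have h := hpy.1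
    rw [one_div_mul_eq_div, sub_le_iff_le_add, div_le_iff₀ hq] at h
    nlinarith
  constructor
  · have key : u + v ≤ 3 * M * (dist x y + Q) := by
      nlinarith [mul_le_mul_of_nonneg_right hqM (by positivity : (0 : ℝ) ≤ 2 * dist x y + Q),
        dist_nonneg (x := x) (y := y)]
    rw [one_div_mul_eq_div, sub_le_iff_le_add, div_le_iff₀ (by positivity)]
    linarith
  · nlinarith [dist_triangle x p y, mul_le_mul_of_nonneg_right hqM hv,
      mul_le_mul_of_nonneg_right hM1 hu]

lemma QGOn.geodesic_append {γ : ℝ → X} {o : X} {q Q a' t₀ b : ℝ} (hq : 0 < q) (hQ : 0 ≤ Q)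
    (hgeod : ∀ s t : ℝ, s ∈ Icc a' t₀ → t ∈ Icc a' t₀ → dist (γ s) (γ t) = |s - t|)
    (hγa' : γ a' = o) (hγ : QGOn q Q t₀ b γ)
    (hmin : ∀ t ∈ Icc t₀ b, dist o (γ t₀) ≤ dist o (γ t)) :
    QGOn (3 * max q 1) Q a' b γ := by
  have hq' : q ≤ 3 * max q 1 := by linarith [le_max_left q 1, le_max_right q 1]
  have hgeodQG : QGOn (3 * max q 1) Q a' t₀ γ :=
    QGOn.mono (q := 1) (Q := 0) (fun s t hs ht => by simp [hgeod s t hs ht]) one_pos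
      (by linarith [le_max_right q 1]) hQ
  have hγQG : QGOn (3 * max q 1) Q t₀ b γ := hγ.mono hq hq' le_rfl
  refine qgOn_of_le fun s t has hst htb => ?_
  have habs : |s - t| = t - s := by rw [abs_sub_comm, abs_of_nonneg (sub_nonneg.2 hst)]
  by_cases ht₀ : t ≤ t₀
  · simpa only [habs] using hgeodQG s t ⟨has, hst.trans ht₀⟩ ⟨has.trans hst, ht₀⟩
  by_cases hs₀ : t₀ ≤ s
  · simpa only [habs] using hγQG s t ⟨hs₀, hst.trans htb⟩ ⟨hs₀.trans hst, htb⟩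
  rw [not_le] at ht₀ hs₀
  have ha't₀ : a' ≤ t₀ := has.trans hs₀.le
  have hs : s ∈ Icc a' t₀ := ⟨has, hs₀.le⟩
  have hdist_o : ∀ u ∈ Icc a' t₀, dist o (γ u) = u - a' := fun u hu => by
    rw [← hγa', hgeod a' u (left_mem_Icc.2 ha't₀) hu, abs_sub_comm, abs_of_nonneg (by linarith [hu.1])]
  have hpy := hγ t₀ t (left_mem_Icc.2 (ht₀.le.trans htb)) ⟨ht₀.le, htb⟩
  rw [abs_sub_comm, abs_of_nonneg (by linarith)] at hpy
  have h := dist_bounds_of_closest_point (x := γ s) hq hQ (sub_nonneg.2 hs₀.le)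
    (sub_nonneg.2 ht₀.le)
    (by rw [hdist_o s hs, hdist_o t₀ (right_mem_Icc.2 ha't₀)]; ring)
    (by rw [hgeod s t₀ hs (right_mem_Icc.2 ha't₀), abs_sub_comm, abs_of_nonneg (by linarith)])
    (hmin t ⟨ht₀.le, htb⟩) hpy
  rwa [show t₀ - s + (t - t₀) = t - s by ring] at h

lemma exists_qgSeg_geodesic_append (hgeo : IsGeodesicSpace X) {o : X} {q Q a b t₀ : ℝ}
    {β : ℝ → X} (hq : 0 < q) (hQ : 0 ≤ Q) (hβ : QGSeg q Q a b β) (ht₀ : t₀ ∈ Icc a b)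
    (hmin : ∀ t ∈ Icc a b, dist o (β t₀) ≤ dist o (β t)) :
    ∃ γ : ℝ → X, QGSeg (3 * max q 1) Q (t₀ - dist o (β t₀)) b γ ∧
      γ (t₀ - dist o (β t₀)) = o ∧ EqOn γ β (Icc t₀ b) := by
  obtain ⟨g, hgc, hg0, hgL, hgiso⟩ := hgeo.exists_continuous_geodesic o (β t₀)
  set L := dist o (β t₀)
  have hL : 0 ≤ L := dist_nonneg
  set a' := t₀ - L
  have hjoin : g (t₀ - a') = β t₀ := by rw [show t₀ - a' = L by ring, hgL]
  let γ : ℝ → X := fun u => if u ≤ t₀ then g (u - a') else β u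
  have hγg : ∀ u ≤ t₀, γ u = g (u - a') := fun u hu => if_pos hu
  have hγβ : EqOn γ β (Icc t₀ b) := fun u hu => by
    rcases hu.1.eq_or_lt with heq | hlt
    · rw [← heq]; exact (hγg t₀ le_rfl).trans hjoin
    · exact if_neg hlt.not_ge
  have hγa' : γ a' = o := by rw [hγg a' (by linarith), sub_self, hg0]
  have hcont : Continuous γ :=
    (hgc.comp (continuous_id.sub continuous_const)).if_le hβ.1 continuous_id continuous_const
      fun u hu => by
        change g (u - a') = β u
        rw [show u = t₀ from hu, hjoin]
  have hgeod : ∀ s t : ℝ, s ∈ Icc a' t₀ → t ∈ Icc a' t₀ → dist (γ s) (γ t) = |s - t| := by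
    intro s t hs ht
    have hmem : ∀ u ∈ Icc a' t₀, u - a' ∈ Icc 0 L := fun u hu =>
      ⟨by linarith [hu.1], by linarith [hu.2]⟩
    rw [hγg s hs.2, hγg t ht.2, hgiso _ _ (hmem s hs) (hmem t ht), sub_sub_sub_cancel_right]
  have hsub : Icc t₀ b ⊆ Icc a b := Icc_subset_Icc_left ht₀.1
  have hγQG : QGOn q Q t₀ b γ := fun s t hs ht => by
    rw [hγβ hs, hγβ ht]; exact hβ.2 s t (hsub hs) (hsub ht)
  refine ⟨γ, ⟨hcont, hγQG.geodesic_append hq hQ hgeod hγa' fun t ht => ?_⟩, hγa', hγβ⟩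
  rw [hγβ (left_mem_Icc.2 (ht₀.2)), hγβ ht]
  exact hmin t (hsub ht)

def IsMorseGauge (o : X) (κ : ℝ → ℝ) (Z : Set X) (m : ℝ → ℝ → ℝ) : Prop :=
  ∀ q Q a b : ℝ, 0 < q → 0 ≤ Q → a ≤ b →
    ∀ β : ℝ → X, QGSeg q Q a b β → β a ∈ Z → β b ∈ Z →
      ∀ s ∈ Icc a b, infDist (β s) Z ≤ m q Q * κ (dist o (β s))

section closestPoint

variable {o : X} {κ : ℝ → ℝ} {q Q a b t₀ s : ℝ} {β : ℝ → X}

lemma IsMorseGauge.infDist_le_of_closest {Z : Set X} {m : ℝ → ℝ → ℝ}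
    (hZ : IsMorseGauge o κ Z m) (hoZ : o ∈ Z) (hgeo : IsGeodesicSpace X) (hq : 0 < q)
    (hQ : 0 ≤ Q) (hβ : QGSeg q Q a b β) (ht₀ : t₀ ∈ Icc a b)
    (hmin : ∀ t ∈ Icc a b, dist o (β t₀) ≤ dist o (β t)) (hb : β b ∈ Z) (hs : s ∈ Icc t₀ b) :
    infDist (β s) Z ≤ m (3 * max q 1) Q * κ (dist o (β s)) := by
  obtain ⟨γ, hγ, hγo, hγβ⟩ := exists_qgSeg_geodesic_append hgeo hq hQ hβ ht₀ hmin
  have hL : 0 ≤ dist o (β t₀) := dist_nonneg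
  have h := hZ _ _ _ _ (by positivity) hQ (by linarith [ht₀.2]) γ hγ (by rw [hγo]; exact hoZ)
    (by rw [hγβ (right_mem_Icc.2 ht₀.2)]; exact hb) s ⟨by linarith [hs.1], hs.2⟩
  rwa [hγβ hs] at h

lemma infDist_union_le_of_closest {P R : Set X} {mP mR : ℝ → ℝ → ℝ}
    (hP : IsMorseGauge o κ P mP) (hR : IsMorseGauge o κ R mR) (hoP : o ∈ P) (hoR : o ∈ R)
    (hκ : ∀ t, 0 ≤ κ t) (hgeo : IsGeodesicSpace X) (hq : 0 < q) (hQ : 0 ≤ Q)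
    (hβ : QGSeg q Q a b β) (ht₀ : t₀ ∈ Icc a b)
    (hmin : ∀ t ∈ Icc a b, dist o (β t₀) ≤ dist o (β t)) (hb : β b ∈ P ∪ R)
    (hs : s ∈ Icc t₀ b) :
    infDist (β s) (P ∪ R) ≤
      max (mP (3 * max q 1) Q) (mR (3 * max q 1) Q) * κ (dist o (β s)) := by
  rcases hb with hb | hb
  · calc infDist (β s) (P ∪ R) ≤ infDist (β s) P :=
          infDist_le_infDist_of_subset subset_union_left ⟨o, hoP⟩
      _ ≤ mP (3 * max q 1) Q * κ (dist o (β s)) :=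
          hP.infDist_le_of_closest hoP hgeo hq hQ hβ ht₀ hmin hb hs
      _ ≤ _ := mul_le_mul_of_nonneg_right (le_max_left _ _) (hκ _)
  · calc infDist (β s) (P ∪ R) ≤ infDist (β s) R :=
          infDist_le_infDist_of_subset subset_union_right ⟨o, hoR⟩
      _ ≤ mR (3 * max q 1) Q * κ (dist o (β s)) :=
          hR.infDist_le_of_closest hoR hgeo hq hQ hβ ht₀ hmin hb hs
      _ ≤ _ := mul_le_mul_of_nonneg_right (le_max_right _ _) (hκ _)

end closestPoint

theorem WeaklyKappaMorse.union {o : X} {κ : ℝ → ℝ} {P R : Set X} (hgeo : IsGeodesicSpace X)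
    (hκ : ∀ t, 0 ≤ κ t) (hoP : o ∈ P) (hoR : o ∈ R) (hP : WeaklyKappaMorse o κ P)
    (hR : WeaklyKappaMorse o κ R) : WeaklyKappaMorse o κ (P ∪ R) := by
  obtain ⟨mP, hmP⟩ := hP
  obtain ⟨mR, hmR⟩ := hR
  refine ⟨fun q Q => max (mP (3 * max q 1) Q) (mR (3 * max q 1) Q), ?_⟩
  intro q Q a b hq hQ hab β hβ ha hb s hs
  obtain ⟨t₀, ht₀, hmin⟩ := isCompact_Icc.exists_isMinOn (nonempty_Icc.2 hab)
    (continuous_const.dist hβ.1).continuousOn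
  replace hmin : ∀ t ∈ Icc a b, dist o (β t₀) ≤ dist o (β t) := fun t ht => hmin ht
  rcases le_total t₀ s with hts | hst
  · exact infDist_union_le_of_closest hmP hmR hoP hoR hκ hgeo hq hQ hβ ht₀ hmin
      hb ⟨hts, hs.2⟩
  · have hrev : ∀ u, β (a + b - (a + b - u)) = β u := fun u => by rw [sub_sub_cancel]
    have hflip : ∀ {u}, u ∈ Icc a b → a + b - u ∈ Icc a b := fun hu =>
      ⟨by linarith [hu.2], by linarith [hu.1]⟩
    have h := infDist_union_le_of_closest hmP hmR hoP hoR hκ hgeo hq hQ hβ.reverse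
      (hflip ht₀) (fun t ht => by simpa only [hrev] using hmin _ (hflip ht))
      (by simpa only [add_sub_cancel_right] using ha) (s := a + b - s)
      ⟨by linarith, by linarith [hs.1]⟩
    simpa only [hrev] using h

end

theorem union_of_weaklyKappaMorse_rays_general {X : Type*} [MetricSpace X]
    (hgeo : IsGeodesicSpace X) (κ : ℝ → ℝ) (hκ : Sublinear κ) (o : X)
    (α₁ α₂ : ℝ → X)
    (h₁o : α₁ 0 = o) (h₂o : α₂ 0 = o)
    (hW₁ : WeaklyKappaMorse o κ (α₁ '' Set.Ici 0))
    (hW₂ : WeaklyKappaMorse o κ (α₂ '' Set.Ici 0)) :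
    WeaklyKappaMorse o κ (α₁ '' Set.Ici 0 ∪ α₂ '' Set.Ici 0) :=
  hW₁.union hgeo (fun t => zero_le_one.trans (hκ.1 t)) ⟨0, self_mem_Ici, h₁o⟩
    ⟨0, self_mem_Ici, h₂o⟩ hW₂

/-- If `α₁, α₂` are weakly `κ`-Morse quasi-geodesic rays based at `o` in a geodesic metric
space, then `Z = α₁ ∪ α₂` is weakly `κ`-Morse: any `(q,Q)`-quasi-geodesic segment with
endpoints on `Z` lies in a `(κ, C)`-neighborhood of `Z` with `C` depending only on `q, Q`
and the weak Morse gauges of `α₁, α₂`. -/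
theorem union_of_weaklyKappaMorse_rays {X : Type*} [MetricSpace X]
    (hgeo : IsGeodesicSpace X) (κ : ℝ → ℝ) (hκ : Sublinear κ) (o : X)
    (q₁ Q₁ q₂ Q₂ : ℝ) (hq₁ : 0 < q₁) (hQ₁ : 0 ≤ Q₁) (hq₂ : 0 < q₂) (hQ₂ : 0 ≤ Q₂)
    (α₁ α₂ : ℝ → X) (hα₁ : QGRay q₁ Q₁ α₁) (hα₂ : QGRay q₂ Q₂ α₂)
    (h₁o : α₁ 0 = o) (h₂o : α₂ 0 = o)
    (hW₁ : WeaklyKappaMorse o κ (α₁ '' Set.Ici 0))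
    (hW₂ : WeaklyKappaMorse o κ (α₂ '' Set.Ici 0)) :
    WeaklyKappaMorse o κ (α₁ '' Set.Ici 0 ∪ α₂ '' Set.Ici 0) :=
  union_of_weaklyKappaMorse_rays_general hgeo κ hκ o α₁ α₂ h₁o h₂o hW₁ hW₂
end

section
/- Let X be a proper geodesic metric space, κ a concave monotone increasing sublinear function, and h : [0,∞) → X a (q′,Q′)-quasi-geodesic ray that is weakly κ-Morse. For every q, Q there exists K such that for any (q,Q)-quasi-geodesic α : [0,A] → X with endpoints h(t₁) and h(t₂) (t₁ ≤ t₂), and any s ∈ [0,A]: (1) d(α(s), h) ≤ K·κ(d(o, p_s)) where p_s is a closest point projection of α(s) to h; (2) d(α(s), h) ≤ K·κ(t₂); and (3) d(α(s), h([t₁,t₂])) ≤ K·κ(t₂). -/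
/-!
The weak Morse bound controls `d(α(s), h)` by `κ(‖α(s)‖)`. For (1), `‖α(s)‖ ≤ ‖p_s‖ + m κ(‖α(s)‖)`
and sublinearity of `κ` absorbs the last term. For (2), `α` stays within an affine function of
`t₂` of `o`, and concavity turns `κ` of an affine function of `t₂` into a multiple of `κ(t₂)`.
For (3), if `α(s)` is close to `h` beyond `t₂`, then on `[0, s]` the path `α` passes from near
`h([0,t₂])` to near `h([t₂,∞))`, so by connectedness some `α(r)`, `r ≤ s`, is near both, hence
near `h(t₂)`; as `α` also ends at `h(t₂)`, quasi-geodesicity keeps `α(s)` near `h(t₂)`.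
The case of `α(s)` close to `h` before `t₁` is symmetric.
-/

open Metric Set Filter

theorem ConcaveOn.apply_mul_le_mul {f : ℝ → ℝ} (hf : ConcaveOn ℝ (Ici 0) f) (hf0 : 0 ≤ f 0)
    {c t : ℝ} (hc : 1 ≤ c) (ht : 0 ≤ t) : f (c * t) ≤ c * f t := by
  have hc0 : 0 < c := by linarith
  have hinv : c⁻¹ ≤ 1 := inv_le_one_of_one_le₀ hc
  have key := hf.2 (mem_Ici.2 (by positivity : 0 ≤ c * t)) (mem_Ici.2 le_rfl)
    (by positivity : 0 ≤ c⁻¹) (sub_nonneg.2 hinv) (add_sub_cancel c⁻¹ 1)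
  simp only [smul_eq_mul, mul_zero, add_zero, inv_mul_cancel_left₀ hc0.ne'] at key
  have hle : c⁻¹ * f (c * t) ≤ f t := by nlinarith [sub_nonneg.2 hinv]
  calc f (c * t) = c * (c⁻¹ * f (c * t)) := by field_simp
    _ ≤ c * f t := by gcongr

theorem Sublinear.apply_mul_add_le {κ : ℝ → ℝ} (hκ : Sublinear κ) {a b t : ℝ} (ha : 0 ≤ a)
    (hb : 0 ≤ b) (ht : 0 ≤ t) : κ (a * t + b) ≤ (a + b + 1) * κ 1 * κ t := by
  obtain ⟨hκ1, hmono, hconc, -⟩ := hκ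
  have hmax : a * t + b ≤ (a + b + 1) * max t 1 := by
    nlinarith [le_max_left t 1, le_max_right t 1]
  calc κ (a * t + b) ≤ κ ((a + b + 1) * max t 1) := hmono hmax
    _ ≤ (a + b + 1) * κ (max t 1) :=
      hconc.apply_mul_le_mul (by linarith [hκ1 0]) (by linarith) (le_max_of_le_left ht)
    _ ≤ (a + b + 1) * (κ 1 * κ t) := by
      rw [hmono.map_max]
      gcongr
      exact max_le (le_mul_of_one_le_left (by linarith [hκ1 t]) (hκ1 1))
        (le_mul_of_one_le_right (by linarith [hκ1 1]) (hκ1 t))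
    _ = (a + b + 1) * κ 1 * κ t := by ring

theorem Sublinear.exists_apply_le_mul_of_le_add {κ : ℝ → ℝ} (hκ : Sublinear κ) {m : ℝ}
    (hm : 0 ≤ m) : ∃ K, 0 ≤ K ∧ ∀ x y, 0 ≤ x → 0 ≤ y → x ≤ y + m * κ x → κ x ≤ K * κ y := by
  obtain ⟨hκ1, hmono, hconc, hlim⟩ := hκ
  obtain ⟨R, hR⟩ := eventually_atTop.1
    (hlim.eventually_lt_const (by positivity : (0 : ℝ) < 1 / (2 * (m + 1))))
  set K := 2 + κ (max R 1)
  refine ⟨K, by linarith [hκ1 (max R 1)], fun x y hx hy hxy => ?_⟩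
  have hKy : κ (max R 1) ≤ K * κ y := by nlinarith [hκ1 y, hκ1 (max R 1)]
  rcases le_or_gt (max R 1) x with hRx | hxR
  · -- for large `x` sublinearity gives `m * κ x ≤ x / 2`, hence `x ≤ 2 * y`
    have hx0 : 0 < x := by linarith [le_max_right R 1]
    have hsmall := hR x (le_of_max_le_left hRx)
    rw [div_lt_div_iff₀ hx0 (by positivity)] at hsmall
    have h2y : x ≤ 2 * y := by nlinarith [hκ1 x]
    calc κ x ≤ κ (2 * y) := hmono h2y
      _ ≤ 2 * κ y := hconc.apply_mul_le_mul (by linarith [hκ1 0]) one_le_two hy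
      _ ≤ K * κ y := by nlinarith [hκ1 y, hκ1 (max R 1)]
  · exact (hmono hxR.le).trans hKy

section

variable {X : Type*} [MetricSpace X]

theorem Metric.infDist_union {x : X} {s t : Set X} (hs : s.Nonempty) (ht : t.Nonempty) :
    infDist x (s ∪ t) = min (infDist x s) (infDist x t) := by
  simp only [infDist, infEDist_union, ENNReal.toReal_min (infEDist_ne_top hs) (infEDist_ne_top ht)]

theorem exists_mem_Icc_infDist_le_of_forall_or {α : ℝ → X} {a b D : ℝ} {S T : Set X}
    (hab : a ≤ b) (hα : ContinuousOn α (Icc a b))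
    (hcover : ∀ r ∈ Icc a b, infDist (α r) S ≤ D ∨ infDist (α r) T ≤ D)
    (ha : infDist (α a) S ≤ D) (hb : infDist (α b) T ≤ D) :
    ∃ r ∈ Icc a b, infDist (α r) S ≤ D ∧ infDist (α r) T ≤ D := by
  have hclosed (U : Set X) : IsClosed (Icc a b ∩ (fun r => infDist (α r) U) ⁻¹' Iic D) :=
    ((continuous_infDist_pt U).comp_continuousOn hα).preimage_isClosed_of_isClosed
      isClosed_Icc isClosed_Iic
  obtain ⟨r, hr, ⟨-, hrS⟩, ⟨-, hrT⟩⟩ := isPreconnected_closed_iff.1 isPreconnected_Icc _ _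
    (hclosed S) (hclosed T) (fun r hr => (hcover r hr).imp (fun h => ⟨hr, h⟩) (fun h => ⟨hr, h⟩))
    ⟨a, left_mem_Icc.2 hab, left_mem_Icc.2 hab, ha⟩ ⟨b, right_mem_Icc.2 hab, right_mem_Icc.2 hab, hb⟩
  exact ⟨r, hr, hrS, hrT⟩

theorem infDist_le_mul_apply_dist_of_eq_dist {κ : ℝ → ℝ} {Z : Set X} {o x p : X} {M K : ℝ}
    (hM : 0 ≤ M) (hcmp : ∀ x y, 0 ≤ x → 0 ≤ y → x ≤ y + M * κ x → κ x ≤ K * κ y)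
    (hx : infDist x Z ≤ M * κ (dist o x)) (hp : infDist x Z = dist x p) :
    infDist x Z ≤ M * K * κ (dist o p) := by
  have hnorm : dist o x ≤ dist o p + M * κ (dist o x) :=
    calc dist o x ≤ dist o p + dist x p := dist_triangle_right o x p
      _ ≤ dist o p + M * κ (dist o x) := by rw [← hp]; gcongr
  calc infDist x Z ≤ M * κ (dist o x) := hx
    _ ≤ M * (K * κ (dist o p)) := by gcongr; exact hcmp _ _ dist_nonneg dist_nonneg hnorm
    _ = M * K * κ (dist o p) := by ring

variable {q Q q' Q' a b A t₁ t₂ : ℝ} {α h : ℝ → X}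

theorem QGSeg.mono (hα : QGSeg q Q a b α) {a' b' : ℝ} (ha : a ≤ a') (hb : b' ≤ b) :
    QGSeg q Q a' b' α :=
  ⟨hα.1, fun s t hs ht => hα.2 s t ⟨ha.trans hs.1, hs.2.trans hb⟩ ⟨ha.trans ht.1, ht.2.trans hb⟩⟩

theorem QGSeg.dist_le (hα : QGSeg q Q a b α) {s t : ℝ} (hs : s ∈ Icc a b) (ht : t ∈ Icc a b) :
    dist (α s) (α t) ≤ q * |s - t| + Q :=
  (hα.2 s t hs ht).2

theorem QGSeg.abs_sub_le (hα : QGSeg q Q a b α) (hq : 0 < q) {s t : ℝ} (hs : s ∈ Icc a b)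
    (ht : t ∈ Icc a b) : |s - t| ≤ q * (dist (α s) (α t) + Q) := by
  have hlow := (hα.2 s t hs ht).1
  rwa [one_div_mul_eq_div, sub_le_iff_le_add, div_le_iff₀' hq] at hlow

theorem QGSeg.dist_left_le (hα : QGSeg q Q a b α) (hq : 0 < q) {r : ℝ} (hr : r ∈ Icc a b) :
    dist (α a) (α r) ≤ q * (q * (dist (α a) (α b) + Q)) + Q := by
  have hab : a ≤ b := hr.1.trans hr.2
  have hlen := hα.abs_sub_le hq (left_mem_Icc.2 hab) (right_mem_Icc.2 hab)
  rw [abs_sub_comm, abs_of_nonneg (sub_nonneg.2 hab)] at hlen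
  calc dist (α a) (α r) ≤ q * |a - r| + Q := hα.dist_le (left_mem_Icc.2 hab) hr
    _ ≤ q * (b - a) + Q := by
      rw [abs_sub_comm, abs_of_nonneg (sub_nonneg.2 hr.1)]
      gcongr
      exact hr.2
    _ ≤ q * (q * (dist (α a) (α b) + Q)) + Q := by gcongr

theorem QGSeg.dist_le_of_between (hα : QGSeg q Q a b α) (hq : 0 < q) {s₁ s s₂ : ℝ}
    (ha : a ≤ s₁) (h₁ : s₁ ≤ s) (h₂ : s ≤ s₂) (hb : s₂ ≤ b) (y : X) :
    dist (α s) y ≤ q * (q * (dist (α s₁) y + dist (α s₂) y + Q)) + Q + dist (α s₁) y :=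
  calc dist (α s) y ≤ dist (α s₁) (α s) + dist (α s₁) y := dist_triangle_left _ _ _
    _ ≤ q * (q * (dist (α s₁) (α s₂) + Q)) + Q + dist (α s₁) y := by
      gcongr
      exact (hα.mono ha hb).dist_left_le hq ⟨h₁, h₂⟩
    _ ≤ q * (q * (dist (α s₁) y + dist (α s₂) y + Q)) + Q + dist (α s₁) y := by
      gcongr
      exact dist_triangle_right _ _ _

theorem QGRay.qgSeg (hh : QGRay q Q h) (b : ℝ) : QGSeg q Q 0 b h :=
  ⟨hh.1, fun s t hs ht => hh.2 s t hs.1 ht.1⟩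

theorem QGRay.dist_le (hh : QGRay q Q h) {s t : ℝ} (hs : 0 ≤ s) (ht : 0 ≤ t) :
    dist (h s) (h t) ≤ q * |s - t| + Q :=
  (hh.2 s t hs ht).2

theorem QGRay.abs_sub_le (hh : QGRay q Q h) (hq : 0 < q) {s t : ℝ} (hs : 0 ≤ s) (ht : 0 ≤ t) :
    |s - t| ≤ q * (dist (h s) (h t) + Q) :=
  (hh.qgSeg (max s t)).abs_sub_le hq ⟨hs, le_max_left s t⟩ ⟨ht, le_max_right s t⟩

theorem QGRay.dist_le_of_infDist_le (hh : QGRay q Q h) (hq : 0 < q) {x : X} {t D : ℝ}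
    (ht : 0 ≤ t) (hS : infDist x (h '' Icc 0 t) ≤ D) (hT : infDist x (h '' Ici t) ≤ D) :
    dist x (h t) ≤ D + 1 + q * (q * (2 * (D + 1) + Q)) + Q := by
  obtain ⟨_, ⟨v₁, hv₁, rfl⟩, hx₁⟩ := (infDist_lt_iff (Nonempty.image h (nonempty_Icc.2 ht))).1
    (hS.trans_lt (lt_add_one D))
  obtain ⟨_, ⟨v₂, hv₂, rfl⟩, hx₂⟩ := (infDist_lt_iff (Nonempty.image h nonempty_Ici)).1
    (hT.trans_lt (lt_add_one D))
  have hv₂0 : 0 ≤ v₂ := ht.trans hv₂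
  have hgap : v₂ - v₁ ≤ q * (2 * (D + 1) + Q) :=
    calc v₂ - v₁ ≤ |v₂ - v₁| := le_abs_self _
      _ ≤ q * (dist (h v₂) (h v₁) + Q) := hh.abs_sub_le hq hv₂0 hv₁.1
      _ ≤ q * (2 * (D + 1) + Q) := by
        gcongr
        linarith [dist_triangle_left (h v₂) (h v₁) x]
  calc dist x (h t) ≤ dist x (h v₂) + dist (h v₂) (h t) := dist_triangle _ _ _
    _ ≤ D + 1 + (q * |v₂ - t| + Q) := add_le_add hx₂.le (hh.dist_le hv₂0 ht)
    _ ≤ D + 1 + q * (q * (2 * (D + 1) + Q)) + Q := by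
      rw [abs_of_nonneg (sub_nonneg.2 hv₂)]
      nlinarith [hv₁.2]


theorem QGRay.dist_apply_zero_le (hh : QGRay q' Q' h) (hq' : 0 < q') (hα : QGSeg q Q 0 A α)
    (hq : 0 < q) (ht₁ : 0 ≤ t₁) (ht₁₂ : t₁ ≤ t₂) (hα0 : α 0 = h t₁) (hαA : α A = h t₂) {r : ℝ}
    (hr : r ∈ Icc 0 A) :
    dist (h 0) (α r) ≤ (q' + q * q * q') * t₂ + (Q' + q * q * (Q' + Q) + Q) := by
  have h01 := hh.dist_le le_rfl ht₁
  rw [zero_sub, abs_neg, abs_of_nonneg ht₁] at h01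
  have h12 := hh.dist_le ht₁ (ht₁.trans ht₁₂)
  rw [abs_sub_comm, abs_of_nonneg (sub_nonneg.2 ht₁₂)] at h12
  have hexc := hα.dist_left_le hq hr
  rw [hα0, hαA] at hexc
  calc dist (h 0) (α r) ≤ dist (h 0) (h t₁) + dist (h t₁) (α r) := dist_triangle _ _ _
    _ ≤ q' * t₁ + Q' + (q * (q * (q' * (t₂ - t₁) + Q' + Q)) + Q) :=
      add_le_add h01 (hexc.trans (by gcongr))
    _ ≤ (q' + q * q * q') * t₂ + (Q' + q * q * (Q' + Q) + Q) := by
      nlinarith [mul_le_mul_of_nonneg_left ht₁₂ hq'.le,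
        mul_nonneg (mul_nonneg (mul_self_nonneg q) hq'.le) ht₁]

theorem QGSeg.infDist_image_Icc_le (hα : QGSeg q Q 0 A α) (hq : 0 < q) {D E s : ℝ}
    (ht₁ : 0 ≤ t₁) (ht₁₂ : t₁ ≤ t₂) (hα0 : α 0 = h t₁) (hαA : α A = h t₂)
    (hD : ∀ r ∈ Icc 0 A, infDist (α r) (h '' Ici 0) ≤ D)
    (hE : ∀ x t, 0 ≤ t → infDist x (h '' Icc 0 t) ≤ D → infDist x (h '' Ici t) ≤ D →
      dist x (h t) ≤ E)
    (hs : s ∈ Icc 0 A) :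
    infDist (α s) (h '' Icc t₁ t₂) ≤ max D (q * (q * (E + Q)) + Q + E) := by
  have ht₂ : 0 ≤ t₂ := ht₁.trans ht₁₂
  have hD0 : 0 ≤ D := infDist_nonneg.trans (hD s hs)
  have hsplit {x : X} {I J : Set ℝ} (hI : I.Nonempty) (hJ : J.Nonempty)
      (hx : infDist x (h '' (I ∪ J)) ≤ D) : infDist x (h '' I) ≤ D ∨ infDist x (h '' J) ≤ D := by
    rwa [image_union, infDist_union (hI.image h) (hJ.image h), min_le_iff] at hx
  have hon {u : ℝ} {I : Set ℝ} (hu : u ∈ I) : infDist (h u) (h '' I) ≤ D :=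
    (infDist_zero_of_mem (mem_image_of_mem h hu)).trans_le hD0
  have hcross {a b t : ℝ} (ha : 0 ≤ a) (hab : a ≤ b) (hb : b ≤ A) (ht : 0 ≤ t)
      (hSa : infDist (α a) (h '' Icc 0 t) ≤ D) (hTb : infDist (α b) (h '' Ici t) ≤ D) :
      ∃ r ∈ Icc a b, dist (α r) (h t) ≤ E := by
    obtain ⟨r, hr, hS, hT⟩ := exists_mem_Icc_infDist_le_of_forall_or hab hα.1.continuousOn
      (fun r hr => hsplit (nonempty_Icc.2 ht) nonempty_Ici
        (by rw [Icc_union_Ici_eq_Ici ht]; exact hD r ⟨ha.trans hr.1, hr.2.trans hb⟩)) hSa hTb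
    exact ⟨r, hr, hE _ t ht hS hT⟩
  rcases hsplit (nonempty_Icc.2 ht₂) nonempty_Ici
    (by rw [Icc_union_Ici_eq_Ici ht₂]; exact hD s hs) with hL | hR
  · rcases hsplit (nonempty_Icc.2 ht₁) (nonempty_Icc.2 ht₁₂)
      (by rwa [Icc_union_Icc_eq_Icc ht₁ ht₁₂]) with hL | hM
    · obtain ⟨r, hr, hrE⟩ := hcross hs.1 hs.2 le_rfl ht₁ hL (hαA ▸ hon ht₁₂)
      have hsr := hα.dist_le_of_between hq le_rfl hs.1 hr.1 hr.2 (h t₁)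
      rw [hα0, dist_self] at hsr
      have hE0 : 0 ≤ E := dist_nonneg.trans hrE
      calc infDist (α s) (h '' Icc t₁ t₂) ≤ dist (α s) (h t₁) :=
            infDist_le_dist_of_mem (mem_image_of_mem h (left_mem_Icc.2 ht₁₂))
        _ ≤ q * (q * (0 + E + Q)) + Q + 0 := hsr.trans (by gcongr)
        _ ≤ max D (q * (q * (E + Q)) + Q + E) := by rw [zero_add, add_zero]; simp [hE0]
    · exact hM.trans (le_max_left _ _)
  · obtain ⟨r, hr, hrE⟩ := hcross le_rfl hs.1 hs.2 ht₂ (hα0 ▸ hon ⟨ht₁, ht₁₂⟩) hR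
    have hsr := hα.dist_le_of_between hq hr.1 hr.2 hs.2 le_rfl (h t₂)
    rw [hαA, dist_self, add_zero] at hsr
    calc infDist (α s) (h '' Icc t₁ t₂) ≤ dist (α s) (h t₂) :=
          infDist_le_dist_of_mem (mem_image_of_mem h (right_mem_Icc.2 ht₁₂))
      _ ≤ q * (q * (E + Q)) + Q + E := hsr.trans (by gcongr)
      _ ≤ max D (q * (q * (E + Q)) + Q + E) := le_max_right _ _

theorem QGRay.exists_infDist_image_Icc_le (hh : QGRay q' Q' h) (hq' : 0 < q') (hQ' : 0 ≤ Q')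
    (hq : 0 < q) (hQ : 0 ≤ Q) :
    ∃ C, 0 < C ∧ ∀ {A : ℝ} {α : ℝ → X} {t₁ t₂ D s : ℝ}, QGSeg q Q 0 A α → 0 ≤ t₁ → t₁ ≤ t₂ →
      α 0 = h t₁ → α A = h t₂ → (∀ r ∈ Icc 0 A, infDist (α r) (h '' Ici 0) ≤ D) →
      s ∈ Icc 0 A → infDist (α s) (h '' Icc t₁ t₂) ≤ C * (D + 1) := by
  set e := 1 + 2 * q' * q' + q' * q' * Q' + Q'
  have he : 1 ≤ e := by have := mul_nonneg (mul_self_nonneg q') hQ'; nlinarith [mul_self_nonneg q']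
  set C := (q * q + 1) * (e + Q)
  have hC : 1 ≤ C := one_le_mul_of_one_le_of_one_le (by nlinarith) (by linarith)
  refine ⟨C, by linarith, fun {A α t₁ t₂ D s} hα ht₁ ht₁₂ hα0 hαA hD hs => ?_⟩
  have hD0 : 0 ≤ D := infDist_nonneg.trans (hD s hs)
  refine (hα.infDist_image_Icc_le hq ht₁ ht₁₂ hα0 hαA hD
    (fun x t ht hS hT => hh.dist_le_of_infDist_le hq' ht hS hT) hs).trans (max_le ?_ ?_)
  · nlinarith
  · set E := D + 1 + q' * (q' * (2 * (D + 1) + Q')) + Q'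
    have hE : E + Q ≤ (e + Q) * (D + 1) := by
      nlinarith [mul_nonneg (mul_nonneg (mul_self_nonneg q') hQ') hD0, mul_nonneg hQ' hD0,
        mul_nonneg hQ hD0]
    calc q * (q * (E + Q)) + Q + E = (q * q + 1) * (E + Q) := by ring
      _ ≤ (q * q + 1) * ((e + Q) * (D + 1)) := by gcongr
      _ = C * (D + 1) := by ring

end

theorem refining_weak_morse_general {X : Type*} [MetricSpace X]
    (κ : ℝ → ℝ) (hκ : Sublinear κ) (o : X)
    (q' Q' : ℝ) (hq' : 0 < q') (hQ' : 0 ≤ Q')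
    (h : ℝ → X) (hh : QGRay q' Q' h) (h0 : h 0 = o)
    (hwm : WeaklyKappaMorse o κ (h '' Set.Ici 0)) :
    ∀ q Q : ℝ, 0 < q → 0 ≤ Q → ∃ K : ℝ, 0 < K ∧
      ∀ A : ℝ, 0 ≤ A → ∀ α : ℝ → X, QGSeg q Q 0 A α →
      ∀ t₁ t₂ : ℝ, 0 ≤ t₁ → t₁ ≤ t₂ → α 0 = h t₁ → α A = h t₂ →
      ∀ s ∈ Set.Icc (0:ℝ) A,
        (∀ ps : X, ps ∈ h '' Set.Ici 0 →
            Metric.infDist (α s) (h '' Set.Ici 0) = dist (α s) ps →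
            Metric.infDist (α s) (h '' Set.Ici 0) ≤ K * κ (dist o ps)) ∧
        Metric.infDist (α s) (h '' Set.Ici 0) ≤ K * κ t₂ ∧
        Metric.infDist (α s) (h '' Set.Icc t₁ t₂) ≤ K * κ t₂ := by
  obtain ⟨m, hm⟩ := hwm
  intro q Q hq hQ
  have hκ0 (t : ℝ) : 0 ≤ κ t := zero_le_one.trans (hκ.1 t)
  set M := max (m q Q) 1
  have hM : 0 ≤ M := zero_le_one.trans (le_max_right _ _)
  obtain ⟨K₁, hK₁, hcmp⟩ := hκ.exists_apply_le_mul_of_le_add hM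
  obtain ⟨C, hC, hfellow⟩ := hh.exists_infDist_image_Icc_le hq' hQ' hq hQ
  set a := q' + q * q * q'
  set b := Q' + q * q * (Q' + Q) + Q
  set K₂ := M * ((a + b + 1) * κ 1)
  have hK₂ : 0 ≤ K₂ := by have := hκ0 1; positivity
  refine ⟨M * K₁ + K₂ + C * (K₂ + 1), by positivity, ?_⟩
  intro A hA α hα t₁ t₂ ht₁ ht₁₂ hα0 hαA s hs
  have hW (r : ℝ) (hr : r ∈ Icc 0 A) : infDist (α r) (h '' Ici 0) ≤ M * κ (dist o (α r)) :=
    (hm q Q 0 A hq hQ hA α hα ⟨t₁, ht₁, hα0.symm⟩ ⟨t₂, ht₁.trans ht₁₂, hαA.symm⟩ r hr).trans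
      (mul_le_mul_of_nonneg_right (le_max_left _ _) (hκ0 _))
  have hD (r : ℝ) (hr : r ∈ Icc 0 A) : infDist (α r) (h '' Ici 0) ≤ K₂ * κ t₂ :=
    calc infDist (α r) (h '' Ici 0) ≤ M * κ (dist o (α r)) := hW r hr
      _ ≤ M * κ (a * t₂ + b) := by
        gcongr
        exact hκ.2.1 (h0 ▸ hh.dist_apply_zero_le hq' hα hq ht₁ ht₁₂ hα0 hαA hr)
      _ ≤ M * ((a + b + 1) * κ 1 * κ t₂) := by
        gcongr
        exact hκ.apply_mul_add_le (by positivity) (by positivity) (ht₁.trans ht₁₂)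
      _ = K₂ * κ t₂ := by ring
  have hCK₂ : 0 ≤ C * (K₂ + 1) := by positivity
  refine ⟨fun ps _ hps => ?_, ?_, ?_⟩
  · refine (infDist_le_mul_apply_dist_of_eq_dist hM hcmp (hW s hs) hps).trans ?_
    exact mul_le_mul_of_nonneg_right (by linarith) (hκ0 _)
  · exact (hD s hs).trans (mul_le_mul_of_nonneg_right (by nlinarith) (hκ0 _))
  · calc infDist (α s) (h '' Icc t₁ t₂) ≤ C * (K₂ * κ t₂ + 1) :=
          hfellow hα ht₁ ht₁₂ hα0 hαA hD hs
      _ ≤ (M * K₁ + K₂ + C * (K₂ + 1)) * κ t₂ := by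
        nlinarith [hκ.1 t₂, mul_nonneg (mul_nonneg hM hK₁) (hκ0 t₂), mul_nonneg hK₂ (hκ0 t₂)]

/-- Refined weak Morseness for weakly `κ`-Morse rays: if `h` is a weakly `κ`-Morse
`(q',Q')`-quasi-geodesic ray based at `o`, then for all `q, Q` there is `K` such that for
every `(q,Q)`-quasi-geodesic `α : [0,A] → X` with endpoints `h(t₁)`, `h(t₂)` and every
`s ∈ [0,A]`:
(1) `d(α(s), h) ≤ K·κ(‖p_s‖)` for any closest point projection `p_s` of `α(s)` to `h`;
(2) `d(α(s), h) ≤ K·κ(t₂)`;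
(3) `d(α(s), h([t₁,t₂])) ≤ K·κ(t₂)`. -/
theorem refining_weak_morse {X : Type*} [MetricSpace X] [ProperSpace X]
    (hgeo : IsGeodesicSpace X) (κ : ℝ → ℝ) (hκ : Sublinear κ) (o : X)
    (q' Q' : ℝ) (hq' : 0 < q') (hQ' : 0 ≤ Q')
    (h : ℝ → X) (hh : QGRay q' Q' h) (h0 : h 0 = o)
    (hwm : WeaklyKappaMorse o κ (h '' Set.Ici 0)) :
    ∀ q Q : ℝ, 0 < q → 0 ≤ Q → ∃ K : ℝ, 0 < K ∧
      ∀ A : ℝ, 0 ≤ A → ∀ α : ℝ → X, QGSeg q Q 0 A α →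
      ∀ t₁ t₂ : ℝ, 0 ≤ t₁ → t₁ ≤ t₂ → α 0 = h t₁ → α A = h t₂ →
      ∀ s ∈ Set.Icc (0:ℝ) A,
        (∀ ps : X, ps ∈ h '' Set.Ici 0 →
            Metric.infDist (α s) (h '' Set.Ici 0) = dist (α s) ps →
            Metric.infDist (α s) (h '' Set.Ici 0) ≤ K * κ (dist o ps)) ∧
        Metric.infDist (α s) (h '' Set.Ici 0) ≤ K * κ t₂ ∧
        Metric.infDist (α s) (h '' Set.Icc t₁ t₂) ≤ K * κ t₂ :=
  refining_weak_morse_general κ hκ o q' Q' hq' hQ' h hh h0 hwm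
end

section
/- Let X, Y be coarse median spaces of rank v and f : X → Y a K-median quasi-isometry. Then there exists K′, depending only on v, K and the coarse median parameters, such that for every subset A ⊆ X, the Hausdorff distance between f(hull(A)) and hull(f(A)) is at most K′. -/
open Metric Set

/-- A coarse median space: a metric space with a ternary median operation which is
coarsely Lipschitz (Bowditch), together with a rank. -/
structure CMS (X : Type*) [MetricSpace X] where
  m : X → X → X → X
  C : ℝ
  C_nonneg : 0 ≤ C
  lip : ∀ x y z x' y' z' : X,
    dist (m x y z) (m x' y' z') ≤ C * (dist x x' + dist y y' + dist z z') + C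
  rank : ℕ

variable {X Y : Type*} [MetricSpace X] [MetricSpace Y]

/-- The median interval `[x,y] = { m(x,y,z) : z ∈ X }`. -/
def CMS.interval (M : CMS X) (x y : X) : Set X := {w | ∃ z : X, M.m x y z = w}

/-- The median join `J(A) = ⋃_{x,y ∈ A} [x,y]`. -/
def CMS.join (M : CMS X) (A : Set X) : Set X :=
  ⋃ x ∈ A, ⋃ y ∈ A, M.interval x y

/-- Iterated join. -/
def CMS.joinIter (M : CMS X) : ℕ → Set X → Set X
  | 0, A => A
  | n + 1, A => M.join (M.joinIter n A)

/-- The median hull `hull(A) = J^{rank}(A)`. -/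
def CMS.mhull (M : CMS X) (A : Set X) : Set X := M.joinIter M.rank A

/-- `f` is a `K`-median quasi-isometry. -/
def IsMedianQI (MX : CMS X) (MY : CMS Y) (K : ℝ) (f : X → Y) : Prop :=
  (∀ x y z : X, dist (f (MX.m x y z)) (MY.m (f x) (f y) (f z)) ≤ K) ∧
  (∀ x y : X, dist x y / K - K ≤ dist (f x) (f y) ∧ dist (f x) (f y) ≤ K * dist x y + K) ∧
  (∀ y : Y, ∃ x : X, dist (f x) y ≤ K)

/-- The recursive constant controlling the Hausdorff distance after `n` joins. -/
def cfun (K C : ℝ) : ℕ → ℝ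
  | 0 => 0
  | n + 1 => K + C * (2 * cfun K C n + K) + C

lemma cfun_nonneg {K C : ℝ} (hK : 0 ≤ K) (hC : 0 ≤ C) : ∀ n, 0 ≤ cfun K C n
  | 0 => le_refl 0
  | n + 1 => by
    have h := cfun_nonneg hK hC n
    simp only [cfun]
    positivity

/-- Main inductive step: after `n` joins, `f '' (J_X^n A)` and `J_Y^n (f '' A)` are
within `cfun K MY.C n` of each other, pointwise in both directions. -/
lemma joinIter_approx (MX : CMS X) (MY : CMS Y) (K : ℝ) (hK : 0 < K)
    (f : X → Y) (hf : IsMedianQI MX MY K f) (A : Set X) : ∀ n : ℕ,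
    (∀ p ∈ f '' MX.joinIter n A, ∃ q ∈ MY.joinIter n (f '' A),
      dist p q ≤ cfun K MY.C n) ∧
    (∀ q ∈ MY.joinIter n (f '' A), ∃ p ∈ f '' MX.joinIter n A,
      dist q p ≤ cfun K MY.C n) := by
  obtain ⟨hmed, hqi, hsurj⟩ := hf
  have hC := MY.C_nonneg
  intro n
  induction n with
  | zero =>
    refine ⟨fun p hp => ⟨p, hp, by simp [cfun]⟩, fun q hq => ⟨q, hq, by simp [cfun]⟩⟩
  | succ n ih =>
    obtain ⟨ih1, ih2⟩ := ih
    have hcn := cfun_nonneg hK.le hC n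
    constructor
    · rintro p ⟨x, hx, rfl⟩
      simp only [CMS.joinIter, CMS.join, CMS.interval, mem_iUnion, mem_setOf_eq] at hx
      obtain ⟨b1, hb1, b2, hb2, z, rfl⟩ := hx
      obtain ⟨q1, hq1, hd1⟩ := ih1 (f b1) ⟨b1, hb1, rfl⟩
      obtain ⟨q2, hq2, hd2⟩ := ih1 (f b2) ⟨b2, hb2, rfl⟩
      refine ⟨MY.m q1 q2 (f z), ?_, ?_⟩
      · simp only [CMS.joinIter, CMS.join, CMS.interval, mem_iUnion, mem_setOf_eq]
        exact ⟨q1, hq1, q2, hq2, f z, rfl⟩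
      · calc dist (f (MX.m b1 b2 z)) (MY.m q1 q2 (f z))
            ≤ dist (f (MX.m b1 b2 z)) (MY.m (f b1) (f b2) (f z))
              + dist (MY.m (f b1) (f b2) (f z)) (MY.m q1 q2 (f z)) := dist_triangle _ _ _
          _ ≤ K + (MY.C * (dist (f b1) q1 + dist (f b2) q2 + dist (f z) (f z)) + MY.C) := by
              gcongr
              · exact hmed b1 b2 z
              · exact MY.lip _ _ _ _ _ _
          _ ≤ K + (MY.C * (cfun K MY.C n + cfun K MY.C n + 0) + MY.C) := by
              gcongr
              simp
          _ ≤ cfun K MY.C (n + 1) := by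
              simp only [cfun]
              nlinarith [mul_nonneg hC hK.le]
    · rintro q hq
      simp only [CMS.joinIter, CMS.join, CMS.interval, mem_iUnion, mem_setOf_eq] at hq
      obtain ⟨q1, hq1, q2, hq2, w, rfl⟩ := hq
      obtain ⟨p1, hp1, hd1⟩ := ih2 q1 hq1
      obtain ⟨p2, hp2, hd2⟩ := ih2 q2 hq2
      obtain ⟨b1, hb1, rfl⟩ := hp1
      obtain ⟨b2, hb2, rfl⟩ := hp2
      obtain ⟨z, hz⟩ := hsurj w
      refine ⟨f (MX.m b1 b2 z), ⟨MX.m b1 b2 z, ?_, rfl⟩, ?_⟩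
      · simp only [CMS.joinIter, CMS.join, CMS.interval, mem_iUnion, mem_setOf_eq]
        exact ⟨b1, hb1, b2, hb2, z, rfl⟩
      · calc dist (MY.m q1 q2 w) (f (MX.m b1 b2 z))
            ≤ dist (MY.m q1 q2 w) (MY.m (f b1) (f b2) (f z))
              + dist (MY.m (f b1) (f b2) (f z)) (f (MX.m b1 b2 z)) := dist_triangle _ _ _
          _ ≤ (MY.C * (dist q1 (f b1) + dist q2 (f b2) + dist w (f z)) + MY.C) + K := by
              gcongr
              · exact MY.lip _ _ _ _ _ _
              · rw [dist_comm]; exact hmed b1 b2 z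
          _ ≤ (MY.C * (cfun K MY.C n + cfun K MY.C n + K) + MY.C) + K := by
              gcongr
              rw [dist_comm]; exact hz
          _ = cfun K MY.C (n + 1) := by simp only [cfun]; ring

/-- Taking median hulls coarsely commutes with median quasi-isometries: if `X, Y` are
coarse median spaces of rank `v` and `f : X → Y` is a `K`-median quasi-isometry, then
there is `K'`, depending only on `v`, `K` and the coarse median parameters, such that
`d_Haus(f(hull(A)), hull(f(A))) ≤ K'` for every subset `A ⊆ X`. -/
theorem hulls_commute_with_median_qi (MX : CMS X) (MY : CMS Y)
    (v : ℕ) (hvX : MX.rank = v) (hvY : MY.rank = v) (K : ℝ) (hK : 0 < K) :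
    ∃ K' : ℝ, 0 < K' ∧ ∀ f : X → Y, IsMedianQI MX MY K f →
      ∀ A : Set X, A.Nonempty →
        Metric.hausdorffDist (f '' MX.mhull A) (MY.mhull (f '' A)) ≤ K' := by
  refine ⟨max (cfun K MY.C v) 1, lt_of_lt_of_le one_pos (le_max_right _ _), ?_⟩
  intro f hf A _
  obtain ⟨h1, h2⟩ := joinIter_approx MX MY K hK f hf A v
  have hle : cfun K MY.C v ≤ max (cfun K MY.C v) 1 := le_max_left _ _
  unfold CMS.mhull
  rw [hvX, hvY]
  apply Metric.hausdorffDist_le_of_mem_dist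
    (le_trans (cfun_nonneg hK.le MY.C_nonneg v) hle)
  · intro p hp
    obtain ⟨q, hq, hd⟩ := h1 p hp
    exact ⟨q, hq, hd.trans hle⟩
  · intro q hq
    obtain ⟨p, hp, hd⟩ := h2 q hq
    exact ⟨p, hp, hd.trans hle⟩
end
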